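/- Let (g, r) be a finite-dimensional factorisable Lie bialgebra over a field of characteristic not 2. Under the Lie algebra isomorphism θ₂: T(g) → g⊕g⊕g, the quasitriangular structure r_T = (0⊕r⁽¹⁾⊕0)⊗(0⊕r⁽²⁾⊕0) + Σₐ(0⊕0⊕fᵃ)⊗(eₐ⊕0⊕0) maps to r_⊕ + χ, where r_⊕ = r_AA − τ(r_BB) + r_CC is the direct sum quasitriangular structure (opposite structure on the middle copy) and χ = r_AB − τ(r_AB) + r_BC − τ(r_BC) + r_AC − τ(r_AC). Moreover χ + χ₂₁ = 0 and χ is a valid twisting cocycle, so T(g) ≅ (g⊕g⊕g)_χ as Lie bialgebras. -/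
import Mathlib


open TensorProduct LinearMap Module

namespace Trip

variable {k : Type*} [Field k]
variable {M : Type*} [AddCommGroup M] [Module k M]

variable (k M) in
/-- The tensor flip `τ`. -/
noncomputable def τ : M ⊗[k] M ≃ₗ[k] M ⊗[k] M := TensorProduct.comm k M M

variable (k M) in
/-- Cyclic rotation `x⊗y⊗z ↦ z⊗x⊗y` on the triple tensor product. -/
noncomputable def ρ : M ⊗[k] (M ⊗[k] M) ≃ₗ[k] M ⊗[k] (M ⊗[k] M) :=
  (TensorProduct.assoc k M M M).symm ≪≫ₗ TensorProduct.comm k (M ⊗[k] M) M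

/-- The bracket as a map on the tensor square. -/
noncomputable def brM (B : M →ₗ[k] M →ₗ[k] M) : M ⊗[k] M →ₗ[k] M := TensorProduct.lift B

variable (B : M →ₗ[k] M →ₗ[k] M)

/-- `(a⊗b)⊗(c⊗d) ↦ [a,c]⊗b⊗d`, the `[r₁₂,s₁₃]` component of the Schouten bracket. -/
noncomputable def s1213 : (M ⊗[k] M) ⊗[k] (M ⊗[k] M) →ₗ[k] M ⊗[k] (M ⊗[k] M) :=
  (TensorProduct.map (brM B) LinearMap.id) ∘ₗ (tensorTensorTensorComm k M M M M).toLinearMap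

/-- `(a⊗b)⊗(c⊗d) ↦ a⊗[b,c]⊗d`, the `[r₁₂,s₂₃]` component. -/
noncomputable def s1223 : (M ⊗[k] M) ⊗[k] (M ⊗[k] M) →ₗ[k] M ⊗[k] (M ⊗[k] M) :=
  (LinearMap.lTensor M ((TensorProduct.map (brM B) LinearMap.id) ∘ₗ
      (TensorProduct.assoc k M M M).symm.toLinearMap)) ∘ₗ
    (TensorProduct.assoc k M M (M ⊗[k] M)).toLinearMap

/-- `(a⊗b)⊗(c⊗d) ↦ a⊗c⊗[b,d]`, the `[r₁₃,s₂₃]` component. -/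
noncomputable def s1323 : (M ⊗[k] M) ⊗[k] (M ⊗[k] M) →ₗ[k] M ⊗[k] (M ⊗[k] M) :=
  (LinearMap.lTensor M ((LinearMap.lTensor M (brM B)) ∘ₗ
      ((TensorProduct.assoc k M M M).toLinearMap ∘ₗ
        (TensorProduct.map (TensorProduct.comm k M M).toLinearMap LinearMap.id) ∘ₗ
          (TensorProduct.assoc k M M M).symm.toLinearMap))) ∘ₗ
    (TensorProduct.assoc k M M (M ⊗[k] M)).toLinearMap

/-- The Schouten bracket `[[r,s]] = [r₁₂,s₁₃] + [r₁₂,s₂₃] + [r₁₃,s₂₃]`. -/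
noncomputable def schouten (r s : M ⊗[k] M) : M ⊗[k] (M ⊗[k] M) :=
  (s1213 B) (r ⊗ₜ s) + (s1223 B) (r ⊗ₜ s) + (s1323 B) (r ⊗ₜ s)

/-- The extension of the adjoint-type action `B x` to the tensor square. -/
noncomputable def adT (x : M) : M ⊗[k] M →ₗ[k] M ⊗[k] M :=
  TensorProduct.map (B x) LinearMap.id + TensorProduct.map LinearMap.id (B x)

/-- The extension of the adjoint-type action `B x` to the triple tensor product. -/
noncomputable def adT3 (x : M) : M ⊗[k] (M ⊗[k] M) →ₗ[k] M ⊗[k] (M ⊗[k] M) :=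
  TensorProduct.map (B x) LinearMap.id + LinearMap.lTensor M (adT B x)

/-- The coboundary `δ_r : x ↦ ad_x(r)` of an element `r ∈ M⊗M`, as a linear map. -/
noncomputable def cobdryL (r : M ⊗[k] M) : M →ₗ[k] M ⊗[k] M where
  toFun x := adT B x r
  map_add' x y := by
    simp [adT, map_add, TensorProduct.map_add_left, TensorProduct.map_add_right,
      LinearMap.add_apply]
    abel
  map_smul' c x := by
    simp [adT, map_smul, TensorProduct.map_smul_left, TensorProduct.map_smul_right,
      LinearMap.add_apply, LinearMap.smul_apply, smul_add]

/-- `B` is a Lie bracket: alternating and satisfying the (Leibniz form of the) Jacobi identity. -/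
def IsLieBr : Prop :=
  (∀ x, B x x = 0) ∧ ∀ x y z, B x (B y z) = B (B x y) z + B y (B x z)

/-- Anticocommutativity `δ + τ∘δ = 0`. -/
def Antico (δ : M →ₗ[k] M ⊗[k] M) : Prop := ∀ x, δ x + (τ k M) (δ x) = 0

/-- The co-Jacobi identity `(δ⊗id)∘δ + cyclic = 0`. -/
def CoJacobi (δ : M →ₗ[k] M ⊗[k] M) : Prop :=
  ∀ x, (TensorProduct.assoc k M M M) ((TensorProduct.map δ LinearMap.id) (δ x)) +
      (ρ k M) ((TensorProduct.assoc k M M M) ((TensorProduct.map δ LinearMap.id) (δ x))) +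
      (ρ k M) ((ρ k M) ((TensorProduct.assoc k M M M)
        ((TensorProduct.map δ LinearMap.id) (δ x)))) = 0

/-- The 1-cocycle compatibility `δ[x,y] = ad_x(δ y) − ad_y(δ x)`. -/
def Cocycle (δ : M →ₗ[k] M ⊗[k] M) : Prop :=
  ∀ x y, δ (B x y) = adT B x (δ y) - adT B y (δ x)

/-- `(M, B, δ)` is a Lie bialgebra. -/
def IsLieBialg (δ : M →ₗ[k] M ⊗[k] M) : Prop :=
  IsLieBr B ∧ Antico δ ∧ CoJacobi δ ∧ Cocycle B δ

/-- The classical Yang–Baxter equation `[[r,r]] = 0`. -/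
def CYBE (r : M ⊗[k] M) : Prop := schouten B r r = 0

/-- `(M, B, r)` is a quasitriangular Lie bialgebra: `r` satisfies the CYBE, its symmetric
part is ad-invariant, and the coboundary `δ = ad_•(r)` makes `M` a Lie bialgebra. -/
def IsQT (r : M ⊗[k] M) : Prop :=
  CYBE B r ∧ (∀ x, adT B x (r + (τ k M) r) = 0) ∧ IsLieBialg B (cobdryL B r)

section contr
variable {N : Type*} [AddCommGroup N] [Module k N]

/-- Contraction against the first tensor factor: `a⊗b ↦ φ(a) • b`. -/
noncomputable def contr1 (φ : Module.Dual k N) : N ⊗[k] N →ₗ[k] N :=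
  (TensorProduct.lid k N).toLinearMap ∘ₗ TensorProduct.map φ LinearMap.id

/-- Contraction against the second tensor factor: `a⊗b ↦ φ(b) • a`. -/
noncomputable def contr2 (φ : Module.Dual k N) : N ⊗[k] N →ₗ[k] N :=
  (TensorProduct.rid k N).toLinearMap ∘ₗ TensorProduct.map LinearMap.id φ

end contr

/-- The bracket on the dual space obtained by dualising a cobracket `δ`. -/
noncomputable def dualBr (δ : M →ₗ[k] M ⊗[k] M) :
    Module.Dual k M →ₗ[k] Module.Dual k M →ₗ[k] Module.Dual k M :=
  LinearMap.compr₂ (TensorProduct.mk k (Module.Dual k M) (Module.Dual k M))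
    (δ.dualMap ∘ₗ TensorProduct.dualDistrib k M M)

/-- The cobracket on the dual space obtained by dualising the bracket `B`
(finite-dimensional case). -/
noncomputable def dualCo [FiniteDimensional k M] :
    Module.Dual k M →ₗ[k] Module.Dual k M ⊗[k] Module.Dual k M :=
  (TensorProduct.dualDistribEquiv k M M).symm.toLinearMap ∘ₗ (brM B).dualMap

end Trip

namespace Trip

variable {k : Type*} [Field k] {M : Type*} [AddCommGroup M] [Module k M]
variable (B : M →ₗ[k] M →ₗ[k] M)

/-- The bracket of the triple `T(g)` on `b ⊕ g ⊕ c` with `b = c = g̲` (factorisable case),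
 as a plain function. -/
noncomputable def tbr (u v : M × M × M) : M × M × M :=
  (B u.1 v.1 + B u.1 v.2.1 - B u.1 v.2.2 + B u.2.1 v.1 - B u.2.2 v.1,
    B u.1 v.2.2 + B u.2.1 v.2.1 + B u.2.2 v.1,
    B u.2.2 v.1 + B u.2.2 v.2.1 - B u.2.2 v.2.2 + B u.2.1 v.2.2 + B u.1 v.2.2)

/-- The bracket of the triple `T(g)`, bundled as a bilinear map. -/
noncomputable def tripleBr : (M × M × M) →ₗ[k] (M × M × M) →ₗ[k] (M × M × M) :=
  LinearMap.mk₂ k (tbr B)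
    (fun p p' q => by
      refine Prod.ext ?_ (Prod.ext ?_ ?_) <;>
        simp [tbr, map_add, LinearMap.add_apply] <;> abel)
    (fun c p q => by
      refine Prod.ext ?_ (Prod.ext ?_ ?_) <;>
        simp [tbr, map_smul, LinearMap.smul_apply, smul_add, smul_sub])
    (fun p q q' => by
      refine Prod.ext ?_ (Prod.ext ?_ ?_) <;>
        simp [tbr, map_add] <;> abel)
    (fun c p q => by
      refine Prod.ext ?_ (Prod.ext ?_ ?_) <;>
        simp [tbr, map_smul, smul_add, smul_sub])

/-- The componentwise (direct sum) Lie bracket on `g ⊕ g ⊕ g`. -/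
noncomputable def diagBr : (M × M × M) →ₗ[k] (M × M × M) →ₗ[k] (M × M × M) :=
  LinearMap.mk₂ k (fun p q => (B p.1 q.1, B p.2.1 q.2.1, B p.2.2 q.2.2))
    (fun p p' q => by
      refine Prod.ext ?_ (Prod.ext ?_ ?_) <;> simp [map_add, LinearMap.add_apply])
    (fun c p q => by
      refine Prod.ext ?_ (Prod.ext ?_ ?_) <;> simp [map_smul, LinearMap.smul_apply])
    (fun p q q' => by refine Prod.ext ?_ (Prod.ext ?_ ?_) <;> simp [map_add])
    (fun c p q => by refine Prod.ext ?_ (Prod.ext ?_ ?_) <;> simp [map_smul])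

/-- The Lie subalgebra/ideal `I₋ = {x ⊕ (−x) ⊕ 0}` of `T(g)`. -/
def Iminus : Set (M × M × M) := {u | ∃ x : M, u = (x, -x, 0)}

/-- The Lie subalgebra/ideal `I₀ = {x ⊕ (−x) ⊕ (−x)}` of `T(g)`. -/
def Izero : Set (M × M × M) := {u | ∃ x : M, u = (x, -x, -x)}

/-- The Lie subalgebra/ideal `I₊ = {0 ⊕ x ⊕ x}` of `T(g)`. -/
def Iplus : Set (M × M × M) := {u | ∃ x : M, u = (0, x, x)}

variable (k M) in
/-- The re-diagonalising isomorphism `θ₂ : b ⊕ g ⊕ c ↦ (b+g) ⊕ (b+g−c) ⊕ (g−c)`. -/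
noncomputable def theta2 : (M × M × M) →ₗ[k] (M × M × M) :=
  ((LinearMap.fst k M (M × M) +
      (LinearMap.fst k M M) ∘ₗ (LinearMap.snd k M (M × M)))).prod
    (((LinearMap.fst k M (M × M) +
        (LinearMap.fst k M M) ∘ₗ (LinearMap.snd k M (M × M))) -
        (LinearMap.snd k M M) ∘ₗ (LinearMap.snd k M (M × M))).prod
      ((LinearMap.fst k M M) ∘ₗ (LinearMap.snd k M (M × M)) -
        (LinearMap.snd k M M) ∘ₗ (LinearMap.snd k M (M × M))))

variable (k M) in
/-- The inclusion of the first copy (`A`) of `g` into `g ⊕ g ⊕ g`. -/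
noncomputable def iA : M →ₗ[k] M × M × M := LinearMap.inl k M (M × M)

variable (k M) in
/-- The inclusion of the second copy (`B`) of `g` into `g ⊕ g ⊕ g`. -/
noncomputable def iB : M →ₗ[k] M × M × M :=
  (LinearMap.inr k M (M × M)) ∘ₗ (LinearMap.inl k M M)

variable (k M) in
/-- The inclusion of the third copy (`C`) of `g` into `g ⊕ g ⊕ g`. -/
noncomputable def iC : M →ₗ[k] M × M × M :=
  (LinearMap.inr k M (M × M)) ∘ₗ (LinearMap.inr k M M)

variable (r : M ⊗[k] M)

/-- `r_XY = (r⁽¹⁾ in copy X) ⊗ (r⁽²⁾ in copy Y)`. -/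
noncomputable def rXY (f g : M →ₗ[k] M × M × M) : (M × M × M) ⊗[k] (M × M × M) :=
  (TensorProduct.map f g) r

/-- The twisting cocycle piece `χ_XY = r_XY − τ(r_XY)`. -/
noncomputable def chiXY (f g : M →ₗ[k] M × M × M) : (M × M × M) ⊗[k] (M × M × M) :=
  rXY r f g - (τ k (M × M × M)) (rXY r f g)

/-- The direct sum quasitriangular structure `r ⊕ (−r₂₁) ⊕ r` on `g ⊕ g ⊕ g`. -/
noncomputable def rTriple : (M × M × M) ⊗[k] (M × M × M) :=
  rXY r (iA k M) (iA k M) - (τ k (M × M × M)) (rXY r (iB k M) (iB k M)) +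
    rXY r (iC k M) (iC k M)

/-- The full twisting cocycle `χ = χ_AB + χ_BC + χ_AC`. -/
noncomputable def chiTriple : (M × M × M) ⊗[k] (M × M × M) :=
  chiXY r (iA k M) (iB k M) + chiXY r (iB k M) (iC k M) + chiXY r (iA k M) (iC k M)

/-- The quasitriangular structure of the triple `T(g)`:
`r_T = 0⊕r⊕0 + Σₐ (0⊕0⊕fᵃ) ⊗ (eₐ⊕0⊕0)`. -/
noncomputable def rT {ι : Type*} [Fintype ι] (e f : ι → M) :
    (M × M × M) ⊗[k] (M × M × M) :=
  rXY r (iB k M) (iB k M) + ∑ a : ι, (iC k M (f a)) ⊗ₜ[k] (iA k M (e a))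

end Trip
namespace Trip
variable {k : Type*} [Field k]
variable {M : Type*} [AddCommGroup M] [Module k M]
variable (B : M →ₗ[k] M →ₗ[k] M)

lemma s1213_tmul (x y u v : M) :
    s1213 B ((x ⊗ₜ[k] y) ⊗ₜ[k] (u ⊗ₜ[k] v)) = (B x u) ⊗ₜ[k] (y ⊗ₜ[k] v) := by
  simp [s1213, brM]

lemma s1223_tmul (x y u v : M) :
    s1223 B ((x ⊗ₜ[k] y) ⊗ₜ[k] (u ⊗ₜ[k] v)) = x ⊗ₜ[k] ((B y u) ⊗ₜ[k] v) := by
  simp [s1223, brM]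

lemma s1323_tmul (x y u v : M) :
    s1323 B ((x ⊗ₜ[k] y) ⊗ₜ[k] (u ⊗ₜ[k] v)) = x ⊗ₜ[k] (u ⊗ₜ[k] (B y v)) := by
  simp [s1323, brM]

section maps
variable {N₁ N₂ N₃ N₄ : Type*} [AddCommGroup N₁] [Module k N₁] [AddCommGroup N₂] [Module k N₂]
  [AddCommGroup N₃] [Module k N₃] [AddCommGroup N₄] [Module k N₄]

lemma map_neg_left' (f : N₁ →ₗ[k] N₂) (g : N₃ →ₗ[k] N₄) :
    TensorProduct.map (-f) g = - TensorProduct.map f g := by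
  ext x y; simp [TensorProduct.neg_tmul, TensorProduct.tmul_neg]

lemma map_neg_right' (f : N₁ →ₗ[k] N₂) (g : N₃ →ₗ[k] N₄) :
    TensorProduct.map f (-g) = - TensorProduct.map f g := by
  ext x y; simp [TensorProduct.neg_tmul, TensorProduct.tmul_neg]

lemma map_neg_left_apply (f : N₁ →ₗ[k] N₂) (g : N₃ →ₗ[k] N₄) (x : N₁ ⊗[k] N₃) :
    TensorProduct.map (-f) g x = -(TensorProduct.map f g x) := by
  rw [map_neg_left']; rfl

lemma map_neg_right_apply (f : N₁ →ₗ[k] N₂) (g : N₃ →ₗ[k] N₄) (x : N₁ ⊗[k] N₃) :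
    TensorProduct.map f (-g) x = -(TensorProduct.map f g x) := by
  rw [map_neg_right']; rfl

lemma tau_map (f : M →ₗ[k] N₁) (g : M →ₗ[k] N₁) (s : M ⊗[k] M) :
    τ k N₁ (TensorProduct.map f g s) = TensorProduct.map g f (τ k M s) := by
  induction s using TensorProduct.induction_on with
  | zero => simp
  | tmul x y => simp [τ]
  | add a b ha hb => simp [map_add, ha, hb]

end maps

lemma tau_tau (s : M ⊗[k] M) : τ k M (τ k M s) = s := by
  induction s using TensorProduct.induction_on with
  | zero => simp
  | tmul x y => simp [τ]
  | add a b ha hb => simp [map_add, ha, hb]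

end Trip
namespace Trip
variable {k : Type*} [Field k]
variable {M : Type*} [AddCommGroup M] [Module k M]
variable (B : M →ₗ[k] M →ₗ[k] M)

section red
variable {T : Type*} [AddCommGroup T] [Module k T]

lemma red1213 (D : T →ₗ[k] T →ₗ[k] T) (f g f' g' j : M →ₗ[k] T)
    (hj : ∀ x y, D (f x) (f' y) = j (B x y)) (s t : M ⊗[k] M) :
    s1213 D ((TensorProduct.map f g s) ⊗ₜ[k] (TensorProduct.map f' g' t)) =
      TensorProduct.map j (TensorProduct.map g g') (s1213 B (s ⊗ₜ[k] t)) := by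
  induction s using TensorProduct.induction_on with
  | zero => simp
  | tmul x y =>
    induction t using TensorProduct.induction_on with
    | zero => simp
    | tmul u v => simp [s1213_tmul, hj]
    | add t1 t2 h1 h2 =>
      simp only [map_add, TensorProduct.tmul_add, TensorProduct.add_tmul, h1, h2]
  | add s1 s2 h1 h2 =>
    simp only [map_add, TensorProduct.tmul_add, TensorProduct.add_tmul, h1, h2]

lemma red1223 (D : T →ₗ[k] T →ₗ[k] T) (f g f' g' j : M →ₗ[k] T)
    (hj : ∀ x y, D (g x) (f' y) = j (B x y)) (s t : M ⊗[k] M) :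
    s1223 D ((TensorProduct.map f g s) ⊗ₜ[k] (TensorProduct.map f' g' t)) =
      TensorProduct.map f (TensorProduct.map j g') (s1223 B (s ⊗ₜ[k] t)) := by
  induction s using TensorProduct.induction_on with
  | zero => simp
  | tmul x y =>
    induction t using TensorProduct.induction_on with
    | zero => simp
    | tmul u v => simp [s1223_tmul, hj]
    | add t1 t2 h1 h2 =>
      simp only [map_add, TensorProduct.tmul_add, TensorProduct.add_tmul, h1, h2]
  | add s1 s2 h1 h2 =>
    simp only [map_add, TensorProduct.tmul_add, TensorProduct.add_tmul, h1, h2]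

lemma red1323 (D : T →ₗ[k] T →ₗ[k] T) (f g f' g' j : M →ₗ[k] T)
    (hj : ∀ x y, D (g x) (g' y) = j (B x y)) (s t : M ⊗[k] M) :
    s1323 D ((TensorProduct.map f g s) ⊗ₜ[k] (TensorProduct.map f' g' t)) =
      TensorProduct.map f (TensorProduct.map f' j) (s1323 B (s ⊗ₜ[k] t)) := by
  induction s using TensorProduct.induction_on with
  | zero => simp
  | tmul x y =>
    induction t using TensorProduct.induction_on with
    | zero => simp
    | tmul u v => simp [s1323_tmul, hj]
    | add t1 t2 h1 h2 =>
      simp only [map_add, TensorProduct.tmul_add, TensorProduct.add_tmul, h1, h2]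
  | add s1 s2 h1 h2 =>
    simp only [map_add, TensorProduct.tmul_add, TensorProduct.add_tmul, h1, h2]

lemma schouten_red (D : T →ₗ[k] T →ₗ[k] T) (f g f' g' j₁ j₂ j₃ : M →ₗ[k] T)
    (h1 : ∀ x y, D (f x) (f' y) = j₁ (B x y))
    (h2 : ∀ x y, D (g x) (f' y) = j₂ (B x y))
    (h3 : ∀ x y, D (g x) (g' y) = j₃ (B x y)) (s t : M ⊗[k] M) :
    schouten D (TensorProduct.map f g s) (TensorProduct.map f' g' t) =
      TensorProduct.map j₁ (TensorProduct.map g g') (s1213 B (s ⊗ₜ[k] t)) +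
      TensorProduct.map f (TensorProduct.map j₂ g') (s1223 B (s ⊗ₜ[k] t)) +
      TensorProduct.map f (TensorProduct.map f' j₃) (s1323 B (s ⊗ₜ[k] t)) := by
  rw [schouten, red1213 B D f g f' g' j₁ h1, red1223 B D f g f' g' j₂ h2,
    red1323 B D f g f' g' j₃ h3]

end red

lemma h1213R (x y : M) (t : M ⊗[k] M) :
    s1213 B ((x ⊗ₜ[k] y) ⊗ₜ[k] t) =
      TensorProduct.map (B x) (TensorProduct.mk k M M y) t := by
  induction t using TensorProduct.induction_on with
  | zero => simp
  | tmul u v => simp [s1213_tmul]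
  | add a b ha hb => simp only [map_add, TensorProduct.tmul_add, ha, hb]

lemma h1223R (x y : M) (t : M ⊗[k] M) :
    s1223 B ((x ⊗ₜ[k] y) ⊗ₜ[k] t) =
      x ⊗ₜ[k] (TensorProduct.map (B y) LinearMap.id t) := by
  induction t using TensorProduct.induction_on with
  | zero => simp
  | tmul u v => simp [s1223_tmul]
  | add a b ha hb => simp only [map_add, TensorProduct.tmul_add, ha, hb]

lemma h1323R (x y : M) (t : M ⊗[k] M) :
    s1323 B ((x ⊗ₜ[k] y) ⊗ₜ[k] t) =
      x ⊗ₜ[k] (TensorProduct.map LinearMap.id (B y) t) := by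
  induction t using TensorProduct.induction_on with
  | zero => simp
  | tmul u v => simp [s1323_tmul]
  | add a b ha hb => simp only [map_add, TensorProduct.tmul_add, ha, hb]

lemma h1213L (x y : M) (t : M ⊗[k] M) :
    s1213 B (t ⊗ₜ[k] (x ⊗ₜ[k] y)) =
      TensorProduct.map (B.flip x) ((TensorProduct.mk k M M).flip y) t := by
  induction t using TensorProduct.induction_on with
  | zero => simp
  | tmul u v => simp [s1213_tmul]
  | add a b ha hb => simp only [map_add, TensorProduct.add_tmul, ha, hb]

lemma h1223L (x y : M) (t : M ⊗[k] M) :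
    s1223 B (t ⊗ₜ[k] (x ⊗ₜ[k] y)) =
      TensorProduct.map LinearMap.id
        (((TensorProduct.mk k M M).flip y) ∘ₗ (B.flip x)) t := by
  induction t using TensorProduct.induction_on with
  | zero => simp
  | tmul u v => simp [s1223_tmul]
  | add a b ha hb => simp only [map_add, TensorProduct.add_tmul, ha, hb]

lemma h1323L (x y : M) (t : M ⊗[k] M) :
    s1323 B (t ⊗ₜ[k] (x ⊗ₜ[k] y)) =
      TensorProduct.map LinearMap.id
        ((TensorProduct.mk k M M x) ∘ₗ (B.flip y)) t := by
  induction t using TensorProduct.induction_on with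
  | zero => simp
  | tmul u v => simp [s1323_tmul]
  | add a b ha hb => simp only [map_add, TensorProduct.add_tmul, ha, hb]

end Trip
namespace Trip
variable {k : Type*} [Field k]
variable {M : Type*} [AddCommGroup M] [Module k M]
variable (B : M →ₗ[k] M →ₗ[k] M)

variable (k M) in
/-- Reversal `a⊗b⊗c ↦ c⊗b⊗a`. -/
noncomputable def P3 : M ⊗[k] (M ⊗[k] M) →ₗ[k] M ⊗[k] (M ⊗[k] M) :=
  (LinearMap.lTensor M (TensorProduct.comm k M M).toLinearMap) ∘ₗ
  (TensorProduct.assoc k M M M).toLinearMap ∘ₗ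
  (TensorProduct.map (TensorProduct.comm k M M).toLinearMap LinearMap.id) ∘ₗ
  (TensorProduct.assoc k M M M).symm.toLinearMap ∘ₗ
  (LinearMap.lTensor M (TensorProduct.comm k M M).toLinearMap)

@[simp] lemma P3_tmul (a b c : M) :
    P3 k M (a ⊗ₜ[k] (b ⊗ₜ[k] c)) = c ⊗ₜ[k] (b ⊗ₜ[k] a) := by
  simp [P3]

lemma s1213_tau (hsk : ∀ u v : M, B u v = - B v u) (s t : M ⊗[k] M) :
    s1213 B ((τ k M s) ⊗ₜ[k] (τ k M t)) = - P3 k M (s1323 B (t ⊗ₜ[k] s)) := by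
  induction s using TensorProduct.induction_on with
  | zero => simp
  | tmul x y =>
    induction t using TensorProduct.induction_on with
    | zero => simp
    | tmul u v =>
      simp [τ, s1213_tmul, s1323_tmul, hsk y v, TensorProduct.neg_tmul,
        TensorProduct.tmul_neg]
    | add t1 t2 h1 h2 =>
      simp only [map_add, TensorProduct.tmul_add, TensorProduct.add_tmul, h1, h2]; abel
  | add s1 s2 h1 h2 =>
    simp only [map_add, TensorProduct.tmul_add, TensorProduct.add_tmul, h1, h2]; abel

lemma s1223_tau (hsk : ∀ u v : M, B u v = - B v u) (s t : M ⊗[k] M) :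
    s1223 B ((τ k M s) ⊗ₜ[k] (τ k M t)) = - P3 k M (s1223 B (t ⊗ₜ[k] s)) := by
  induction s using TensorProduct.induction_on with
  | zero => simp
  | tmul x y =>
    induction t using TensorProduct.induction_on with
    | zero => simp
    | tmul u v =>
      simp [τ, s1223_tmul, hsk x v, TensorProduct.neg_tmul, TensorProduct.tmul_neg]
    | add t1 t2 h1 h2 =>
      simp only [map_add, TensorProduct.tmul_add, TensorProduct.add_tmul, h1, h2]; abel
  | add s1 s2 h1 h2 =>
    simp only [map_add, TensorProduct.tmul_add, TensorProduct.add_tmul, h1, h2]; abel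

lemma s1323_tau (hsk : ∀ u v : M, B u v = - B v u) (s t : M ⊗[k] M) :
    s1323 B ((τ k M s) ⊗ₜ[k] (τ k M t)) = - P3 k M (s1213 B (t ⊗ₜ[k] s)) := by
  induction s using TensorProduct.induction_on with
  | zero => simp
  | tmul x y =>
    induction t using TensorProduct.induction_on with
    | zero => simp
    | tmul u v =>
      simp [τ, s1323_tmul, s1213_tmul, hsk x u, TensorProduct.neg_tmul,
        TensorProduct.tmul_neg]
    | add t1 t2 h1 h2 =>
      simp only [map_add, TensorProduct.tmul_add, TensorProduct.add_tmul, h1, h2]; abel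
  | add s1 s2 h1 h2 =>
    simp only [map_add, TensorProduct.tmul_add, TensorProduct.add_tmul, h1, h2]; abel

lemma schouten_tau_zero (hsk : ∀ u v : M, B u v = - B v u) (s : M ⊗[k] M)
    (hs : schouten B s s = 0) : schouten B (τ k M s) (τ k M s) = 0 := by
  rw [schouten, s1213_tau B hsk, s1223_tau B hsk, s1323_tau B hsk]
  have : s1323 B (s ⊗ₜ[k] s) + s1223 B (s ⊗ₜ[k] s) + s1213 B (s ⊗ₜ[k] s) = 0 := by
    rw [schouten] at hs; rw [← hs]; abel
  rw [← neg_add, ← neg_add, ← map_add, ← map_add, this, map_zero, neg_zero]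

end Trip
namespace Trip
variable {k : Type*} [Field k]
variable {M : Type*} [AddCommGroup M] [Module k M]
variable (B : M →ₗ[k] M →ₗ[k] M)

section inv
variable (q : M ⊗[k] M)
  (hinv : ∀ x : M, TensorProduct.map (B x) LinearMap.id q +
    TensorProduct.map LinearMap.id (B x) q = 0)

include hinv in
lemma L1 (s : M ⊗[k] M) : s1223 B (s ⊗ₜ[k] q) + s1323 B (s ⊗ₜ[k] q) = 0 := by
  induction s using TensorProduct.induction_on with
  | zero => simp
  | tmul x y =>
    rw [h1223R, h1323R, ← TensorProduct.tmul_add, hinv y, TensorProduct.tmul_zero]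
  | add s1 s2 h1 h2 =>
    simp only [TensorProduct.add_tmul, map_add]
    rw [add_add_add_comm, h1, h2, add_zero]

variable (hsk : ∀ u v : M, B u v = - B v u)

include hsk in
lemma flip_eq_neg (x : M) : B.flip x = - (B x) := by
  ext u; simp [hsk u x]

include hinv hsk in
lemma L2 (s : M ⊗[k] M) : s1213 B (q ⊗ₜ[k] s) + s1223 B (q ⊗ₜ[k] s) = 0 := by
  induction s using TensorProduct.induction_on with
  | zero => simp
  | tmul x y =>
    rw [h1213L, h1223L]
    have e1 : TensorProduct.map (B.flip x) ((TensorProduct.mk k M M).flip y) =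
        (TensorProduct.map LinearMap.id ((TensorProduct.mk k M M).flip y)) ∘ₗ
          (TensorProduct.map (B.flip x) LinearMap.id) := by
      ext u v; simp
    have e2 : TensorProduct.map (LinearMap.id : M →ₗ[k] M)
          (((TensorProduct.mk k M M).flip y) ∘ₗ (B.flip x)) =
        (TensorProduct.map LinearMap.id ((TensorProduct.mk k M M).flip y)) ∘ₗ
          (TensorProduct.map LinearMap.id (B.flip x)) := by
      ext u v; simp
    rw [e1, e2, LinearMap.comp_apply, LinearMap.comp_apply, ← map_add,
      flip_eq_neg B hsk, map_neg_left', map_neg_right', LinearMap.neg_apply,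
      LinearMap.neg_apply, ← neg_add, hinv x, neg_zero, map_zero]
  | add s1 s2 h1 h2 =>
    simp only [TensorProduct.tmul_add, map_add]
    rw [add_add_add_comm, h1, h2, add_zero]

include hinv hsk in
lemma L3 (s : M ⊗[k] M) :
    s1213 B (s ⊗ₜ[k] q) = s1323 B (q ⊗ₜ[k] (τ k M s)) := by
  induction s using TensorProduct.induction_on with
  | zero => simp
  | tmul x y =>
    have hτ : τ k M (x ⊗ₜ[k] y) = y ⊗ₜ[k] x := by simp [τ]
    rw [hτ, h1213R, h1323L]
    have e1 : TensorProduct.map (B x) (TensorProduct.mk k M M y) =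
        (TensorProduct.map LinearMap.id (TensorProduct.mk k M M y)) ∘ₗ
          (TensorProduct.map (B x) LinearMap.id) := by
      ext u v; simp
    have e2 : TensorProduct.map (LinearMap.id : M →ₗ[k] M)
          ((TensorProduct.mk k M M y) ∘ₗ (B.flip x)) =
        (TensorProduct.map LinearMap.id (TensorProduct.mk k M M y)) ∘ₗ
          (TensorProduct.map LinearMap.id (B.flip x)) := by
      ext u v; simp
    rw [e1, e2, LinearMap.comp_apply, LinearMap.comp_apply]
    congr 1
    rw [flip_eq_neg B hsk, map_neg_right', LinearMap.neg_apply,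
      eq_comm, neg_eq_iff_add_eq_zero, add_comm]
    exact hinv x
  | add s1 s2 h1 h2 =>
    simp only [TensorProduct.add_tmul, TensorProduct.tmul_add, map_add, h1, h2]

end inv

end Trip
namespace Trip
variable {k : Type*} [Field k]
variable {M : Type*} [AddCommGroup M] [Module k M]
variable (B : M →ₗ[k] M →ₗ[k] M)

variable (k M) in
noncomputable def FF : M →ₗ[k] M × M × M := iA k M + iB k M + iC k M
variable (k M) in
noncomputable def GG : M →ₗ[k] M × M × M := - iB k M - iC k M
variable (k M) in
noncomputable def HH : M →ₗ[k] M × M × M := iA k M + iB k M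

@[simp] lemma iA_apply (x : M) : iA k M x = (x, 0, 0) := rfl
@[simp] lemma iB_apply (x : M) : iB k M x = (0, x, 0) := rfl
@[simp] lemma iC_apply (x : M) : iC k M x = (0, 0, x) := rfl

lemma theta2_apply (u : M × M × M) :
    theta2 k M u = (u.1 + u.2.1, u.1 + u.2.1 - u.2.2, u.2.1 - u.2.2) := rfl

lemma theta_iA : (theta2 k M) ∘ₗ iA k M = HH k M := by
  ext x <;> simp [theta2_apply, HH]

lemma theta_iB : (theta2 k M) ∘ₗ iB k M = FF k M := by
  ext x <;> simp [theta2_apply, FF]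

lemma theta_iC : (theta2 k M) ∘ₗ iC k M = GG k M := by
  ext x <;> simp [theta2_apply, GG]

lemma diagBr_apply (u v : M × M × M) :
    diagBr B u v = (B u.1 v.1, B u.2.1 v.2.1, B u.2.2 v.2.2) := rfl

-- bracket table for FF, GG, HH, iB
lemma hFF (x y : M) : diagBr B (FF k M x) (FF k M y) = FF k M (B x y) := by
  simp [diagBr_apply, FF]
lemma hFG (x y : M) : diagBr B (FF k M x) (GG k M y) = GG k M (B x y) := by
  simp [diagBr_apply, FF, GG]
lemma hGF (x y : M) : diagBr B (GG k M x) (FF k M y) = GG k M (B x y) := by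
  simp [diagBr_apply, FF, GG]
lemma hFH (x y : M) : diagBr B (FF k M x) (HH k M y) = HH k M (B x y) := by
  simp [diagBr_apply, FF, HH]
lemma hHF (x y : M) : diagBr B (HH k M x) (FF k M y) = HH k M (B x y) := by
  simp [diagBr_apply, FF, HH]
lemma hGG (x y : M) : diagBr B (GG k M x) (GG k M y) = (- GG k M) (B x y) := by
  simp [diagBr_apply, GG]
lemma hHG (x y : M) : diagBr B (HH k M x) (GG k M y) = (- iB k M) (B x y) := by
  simp [diagBr_apply, GG, HH]
lemma hHH (x y : M) : diagBr B (HH k M x) (HH k M y) = HH k M (B x y) := by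
  simp [diagBr_apply, HH]

lemma sum_FBG : FF k M + iB k M + GG k M = HH k M := by
  ext x <;> simp [FF, GG, HH]

end Trip
namespace Trip
variable {k : Type*} [Field k]
variable {M : Type*} [AddCommGroup M] [Module k M]
variable (B : M →ₗ[k] M →ₗ[k] M)

lemma hAA (x y : M) : diagBr B (iA k M x) (iA k M y) = iA k M (B x y) := by
  simp [diagBr_apply]
lemma hBB (x y : M) : diagBr B (iB k M x) (iB k M y) = iB k M (B x y) := by
  simp [diagBr_apply]
lemma hCC (x y : M) : diagBr B (iC k M x) (iC k M y) = iC k M (B x y) := by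
  simp [diagBr_apply]
lemma hAB (x y : M) :
    diagBr B (iA k M x) (iB k M y) = (0 : M →ₗ[k] M × M × M) (B x y) := by
  simp [diagBr_apply]
lemma hBA (x y : M) :
    diagBr B (iB k M x) (iA k M y) = (0 : M →ₗ[k] M × M × M) (B x y) := by
  simp [diagBr_apply]
lemma hAC (x y : M) :
    diagBr B (iA k M x) (iC k M y) = (0 : M →ₗ[k] M × M × M) (B x y) := by
  simp [diagBr_apply]
lemma hCA (x y : M) :
    diagBr B (iC k M x) (iA k M y) = (0 : M →ₗ[k] M × M × M) (B x y) := by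
  simp [diagBr_apply]
lemma hBC (x y : M) :
    diagBr B (iB k M x) (iC k M y) = (0 : M →ₗ[k] M × M × M) (B x y) := by
  simp [diagBr_apply]
lemma hCB (x y : M) :
    diagBr B (iC k M x) (iB k M y) = (0 : M →ₗ[k] M × M × M) (B x y) := by
  simp [diagBr_apply]

/-- The key re-diagonalisation identity underlying Statement 14(i). -/
lemma theta_core (s : M ⊗[k] M) :
    (TensorProduct.map (FF k M) (FF k M)) s +
      (TensorProduct.map (GG k M) (HH k M)) (s + τ k M s) =
    rTriple s + chiTriple s := by
  induction s using TensorProduct.induction_on with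
  | zero => simp [rTriple, chiTriple, rXY, chiXY]
  | tmul x y =>
    have hτ : τ k M (x ⊗ₜ[k] y) = y ⊗ₜ[k] x := by simp [τ]
    simp only [hτ, TensorProduct.tmul_add, TensorProduct.add_tmul, map_add,
      TensorProduct.map_tmul, rTriple, chiTriple, rXY, chiXY, τ,
      TensorProduct.comm_tmul, FF, GG, HH, LinearMap.add_apply, LinearMap.sub_apply,
      LinearMap.neg_apply, TensorProduct.neg_tmul, TensorProduct.tmul_neg,
      TensorProduct.sub_tmul, TensorProduct.tmul_sub]
    abel
  | add s1 s2 h1 h2 =>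
    have key : (TensorProduct.map (FF k M) (FF k M)) s1 +
        (TensorProduct.map (GG k M) (HH k M)) (s1 + τ k M s1) +
        ((TensorProduct.map (FF k M) (FF k M)) s2 +
          (TensorProduct.map (GG k M) (HH k M)) (s2 + τ k M s2)) =
        rTriple s1 + chiTriple s1 + (rTriple s2 + chiTriple s2) := by rw [h1, h2]
    simp only [map_add, rTriple, chiTriple, rXY, chiXY] at key ⊢
    abel_nf at key ⊢
    exact key

end Trip
namespace Trip
variable {k : Type*} [Field k]
variable {M : Type*} [AddCommGroup M] [Module k M]
variable (B : M →ₗ[k] M →ₗ[k] M)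

section exp
variable {T : Type*} [AddCommGroup T] [Module k T]

lemma schouten_expand2 (D : T →ₗ[k] T →ₗ[k] T) (a b : T ⊗[k] T) :
    schouten D (a + b) (a + b) =
      schouten D a a + schouten D a b + schouten D b a + schouten D b b := by
  simp only [schouten, TensorProduct.add_tmul, TensorProduct.tmul_add, map_add]; abel

lemma schouten_expand_R (D : T →ₗ[k] T →ₗ[k] T) (a b c : T ⊗[k] T) :
    schouten D (a - b + c) (a - b + c) =
      schouten D a a - schouten D a b + schouten D a c -
      schouten D b a + schouten D b b - schouten D b c +
      schouten D c a - schouten D c b + schouten D c c := by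
  simp only [schouten, TensorProduct.add_tmul, TensorProduct.tmul_add,
    TensorProduct.sub_tmul, TensorProduct.tmul_sub, map_add, map_sub]; abel

lemma schouten_same (D : T →ₗ[k] T →ₗ[k] T) (f : M →ₗ[k] T)
    (hf : ∀ x y, D (f x) (f y) = f (B x y)) (s t : M ⊗[k] M) :
    schouten D (TensorProduct.map f f s) (TensorProduct.map f f t) =
      TensorProduct.map f (TensorProduct.map f f) (schouten B s t) := by
  rw [schouten_red B D f f f f f f f hf hf hf, schouten, map_add, map_add]

lemma schouten_zero (B : M →ₗ[k] M →ₗ[k] M) (D : T →ₗ[k] T →ₗ[k] T) (f g f' g' : M →ₗ[k] T)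
    (h1 : ∀ x y, D (f x) (f' y) = 0)
    (h2 : ∀ x y, D (g x) (f' y) = 0)
    (h3 : ∀ x y, D (g x) (g' y) = 0) (s t : M ⊗[k] M) :
    schouten D (TensorProduct.map f g s) (TensorProduct.map f' g' t) = 0 := by
  rw [schouten_red B D f g f' g' 0 0 0 (by simp [h1]) (by simp [h2]) (by simp [h3])]
  simp [TensorProduct.map_zero_left, TensorProduct.map_zero_right]

end exp

lemma skew_of_alt (halt : ∀ x, B x x = 0) (u v : M) : B u v = - B v u := by
  have h0 := halt (u + v)
  simp only [map_add, LinearMap.add_apply] at h0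
  simp only [halt, zero_add, add_zero] at h0
  first
  | exact eq_neg_of_add_eq_zero_left h0
  | exact eq_neg_of_add_eq_zero_right h0

end Trip
namespace Trip
variable {k : Type*} [Field k]
variable {M : Type*} [AddCommGroup M] [Module k M]
variable (B : M →ₗ[k] M →ₗ[k] M)

lemma eq_neg_of_sum {G : Type*} [AddCommGroup G] {a b : G} (h : a + b = 0) : b = -a := by
  rw [← zero_sub, ← h]; abel

@[simp] lemma cobdryL_apply (r : M ⊗[k] M) (x : M) : cobdryL B r x = adT B x r := rfl

end Trip
set_option maxHeartbeats 1000000 in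

/-- Under the Lie algebra isomorphism `θ₂ : T(g) → g⊕g⊕g`, the
quasitriangular structure `r_T = 0⊕r⊕0 + Σₐ(0⊕0⊕fᵃ)⊗(eₐ⊕0⊕0)` maps to `r_⊕ + χ`, where
`r_⊕ = r_AA − τ(r_BB) + r_CC` and `χ = χ_AB + χ_BC + χ_AC` with `χ_XY = r_XY − τ(r_XY)`.
Moreover `χ + χ₂₁ = 0`, `χ` is a valid twisting cocycle, and `T(g) ≅ (g⊕g⊕g)_χ` as Lie
bialgebras. -/
theorem statement14 {k : Type*} [Field k] {M : Type*} [AddCommGroup M] [Module k M]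
    [FiniteDimensional k M] (B : M →ₗ[k] M →ₗ[k] M) (r : M ⊗[k] M) (h : Trip.IsQT B r)
    (hfact : Function.Surjective fun φ : Module.Dual k M =>
      Trip.contr2 φ (r + (Trip.τ k M) r))
    {ι : Type*} [Fintype ι] (bas : Basis ι k M) (e f : ι → M) (he : ∀ a, e a = bas a)
    -- `{fᵃ}` is the basis dual to `{eₐ}` via the Killing-form pairing; equivalently
    -- `Σₐ fᵃ ⊗ eₐ = 2r₊`
    (hq : ∑ a : ι, f a ⊗ₜ[k] e a = r + (Trip.τ k M) r) :
    (TensorProduct.map (Trip.theta2 k M) (Trip.theta2 k M)) (Trip.rT r e f) =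
        Trip.rTriple r + Trip.chiTriple r ∧
    Trip.chiTriple r + (Trip.τ k (M × M × M)) (Trip.chiTriple r) = 0 ∧
    Trip.schouten (Trip.diagBr B) (Trip.rTriple r) (Trip.chiTriple r)
        + Trip.schouten (Trip.diagBr B) (Trip.chiTriple r) (Trip.rTriple r)
        + Trip.schouten (Trip.diagBr B) (Trip.chiTriple r) (Trip.chiTriple r) = 0 ∧
    Function.Bijective (Trip.theta2 k M) ∧
    (∀ u v : M × M × M,
      Trip.theta2 k M (Trip.tripleBr B u v) =
        Trip.diagBr B (Trip.theta2 k M u) (Trip.theta2 k M v)) ∧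
    (∀ u : M × M × M,
      (TensorProduct.map (Trip.theta2 k M) (Trip.theta2 k M))
          (Trip.cobdryL (Trip.tripleBr B) (Trip.rT r e f) u) =
        Trip.cobdryL (Trip.diagBr B) (Trip.rTriple r + Trip.chiTriple r)
          (Trip.theta2 k M u)) := by
  obtain ⟨hrr, hinv0, hbialg⟩ := h
  have halt : ∀ x, B x x = 0 := hbialg.1.1
  have hsk : ∀ u v : M, B u v = - B v u := Trip.skew_of_alt B halt
  -- Conjunct 4 : bijectivity of θ₂
  have c4 : Function.Bijective (Trip.theta2 k M) := by
    refine Function.bijective_iff_has_inverse.mpr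
      ⟨fun p => (p.2.1 - p.2.2, p.2.2 + p.1 - p.2.1, p.1 - p.2.1), fun u => ?_, fun p => ?_⟩ <;>
      refine Prod.ext ?_ (Prod.ext ?_ ?_) <;> simp [Trip.theta2_apply] <;> abel
  -- Conjunct 5 : θ₂ is a Lie algebra map
  have c5 : ∀ u v : M × M × M, Trip.theta2 k M (Trip.tripleBr B u v) =
      Trip.diagBr B (Trip.theta2 k M u) (Trip.theta2 k M v) := by
    intro u v
    refine Prod.ext ?_ (Prod.ext ?_ ?_) <;>
      simp [Trip.theta2_apply, Trip.tripleBr, Trip.diagBr, Trip.tbr, map_add, map_sub,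
        LinearMap.add_apply, LinearMap.sub_apply] <;> abel
  -- Conjunct 1
  have hGC : ∀ x : M, Trip.theta2 k M (Trip.iC k M x) = Trip.GG k M x := fun x =>
    LinearMap.congr_fun (Trip.theta_iC (k := k) (M := M)) x
  have hHA : ∀ x : M, Trip.theta2 k M (Trip.iA k M x) = Trip.HH k M x := fun x =>
    LinearMap.congr_fun (Trip.theta_iA (k := k) (M := M)) x
  have c1 : (TensorProduct.map (Trip.theta2 k M) (Trip.theta2 k M)) (Trip.rT r e f) =
      Trip.rTriple r + Trip.chiTriple r := by
    rw [Trip.rT, map_add, map_sum]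
    have e1 : (TensorProduct.map (Trip.theta2 k M) (Trip.theta2 k M))
        (Trip.rXY r (Trip.iB k M) (Trip.iB k M)) =
        TensorProduct.map (Trip.FF k M) (Trip.FF k M) r := by
      rw [Trip.rXY, ← LinearMap.comp_apply, ← TensorProduct.map_comp, Trip.theta_iB]
    have e2 : ∀ a : ι, (TensorProduct.map (Trip.theta2 k M) (Trip.theta2 k M))
        ((Trip.iC k M (f a)) ⊗ₜ[k] (Trip.iA k M (e a))) =
        TensorProduct.map (Trip.GG k M) (Trip.HH k M) ((f a) ⊗ₜ[k] (e a)) := by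
      intro a; rw [TensorProduct.map_tmul, TensorProduct.map_tmul, hGC, hHA]
    rw [Finset.sum_congr rfl fun a _ => e2 a, ← map_sum, hq, e1]
    exact Trip.theta_core r
  -- Conjunct 2
  have c2 : Trip.chiTriple r + (Trip.τ k (M × M × M)) (Trip.chiTriple r) = 0 := by
    simp only [Trip.chiTriple, Trip.chiXY, map_add, map_sub, Trip.tau_tau]
    abel
  -- Conjunct 6
  have adhom : ∀ (u : M × M × M) (ρ : (M × M × M) ⊗[k] (M × M × M)),
      (TensorProduct.map (Trip.theta2 k M) (Trip.theta2 k M))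
        (Trip.adT (Trip.tripleBr B) u ρ) =
      Trip.adT (Trip.diagBr B) (Trip.theta2 k M u)
        ((TensorProduct.map (Trip.theta2 k M) (Trip.theta2 k M)) ρ) := by
    intro u ρ
    induction ρ using TensorProduct.induction_on with
    | zero => simp
    | tmul a b =>
      simp [Trip.adT, LinearMap.add_apply, TensorProduct.map_tmul, c5,
        TensorProduct.add_tmul, TensorProduct.tmul_add]
    | add a b ha hb => simp only [map_add, ha, hb]
  have c6 : ∀ u : M × M × M,
      (TensorProduct.map (Trip.theta2 k M) (Trip.theta2 k M))
          (Trip.cobdryL (Trip.tripleBr B) (Trip.rT r e f) u) =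
        Trip.cobdryL (Trip.diagBr B) (Trip.rTriple r + Trip.chiTriple r)
          (Trip.theta2 k M u) := by
    intro u
    rw [Trip.cobdryL_apply, Trip.cobdryL_apply, ← c1, adhom u (Trip.rT r e f)]
  -- Conjunct 3
  have hinvq : ∀ x : M, TensorProduct.map (B x) LinearMap.id (r + Trip.τ k M r) +
      TensorProduct.map LinearMap.id (B x) (r + Trip.τ k M r) = 0 := by
    intro x
    have h0 := hinv0 x
    rw [Trip.adT, LinearMap.add_apply] at h0
    exact h0
  set q : M ⊗[k] M := r + Trip.τ k M r with hqdef
  have l1 := Trip.L1 B q hinvq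
  have l2 := fun s => Trip.L2 B q hinvq hsk s
  have l3 := fun s => Trip.L3 B q hinvq hsk s
  set a13 : M ⊗[k] (M ⊗[k] M) := Trip.s1213 B (q ⊗ₜ[k] q) with ha13
  have hf1 : Trip.s1223 B (q ⊗ₜ[k] q) = -a13 := by
    have h' := l2 q
    exact Trip.eq_neg_of_sum h'
  have hf2 : Trip.s1323 B (q ⊗ₜ[k] q) = a13 := by
    have h' := l1 q
    rw [hf1, neg_add_eq_zero] at h'
    exact h'.symm
  have hf3 : Trip.s1213 B (r ⊗ₜ[k] q) + Trip.s1323 B (q ⊗ₜ[k] r) = a13 := by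
    rw [l3 r, ← map_add, ← TensorProduct.tmul_add]
    rw [show Trip.τ k M r + r = q from by rw [hqdef]; exact add_comm _ _]
    exact hf2
  have hττ := Trip.schouten_tau_zero B hsk r hrr
  have hR : Trip.rTriple r = TensorProduct.map (Trip.iA k M) (Trip.iA k M) r -
      TensorProduct.map (Trip.iB k M) (Trip.iB k M) (Trip.τ k M r) +
      TensorProduct.map (Trip.iC k M) (Trip.iC k M) r := by
    rw [Trip.rTriple, Trip.rXY, Trip.rXY, Trip.rXY, Trip.tau_map]
  have hRR : Trip.schouten (Trip.diagBr B) (Trip.rTriple r) (Trip.rTriple r) = 0 := by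
    rw [hR, Trip.schouten_expand_R,
      Trip.schouten_same B (Trip.diagBr B) (Trip.iA k M) (Trip.hAA B) r r,
      Trip.schouten_same B (Trip.diagBr B) (Trip.iB k M) (Trip.hBB B) (Trip.τ k M r) (Trip.τ k M r),
      Trip.schouten_same B (Trip.diagBr B) (Trip.iC k M) (Trip.hCC B) r r,
      Trip.schouten_zero B (Trip.diagBr B) (Trip.iA k M) (Trip.iA k M) (Trip.iB k M)
        (Trip.iB k M) (fun x y => by simp [Trip.diagBr_apply])
        (fun x y => by simp [Trip.diagBr_apply]) (fun x y => by simp [Trip.diagBr_apply])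
        r (Trip.τ k M r),
      Trip.schouten_zero B (Trip.diagBr B) (Trip.iA k M) (Trip.iA k M) (Trip.iC k M)
        (Trip.iC k M) (fun x y => by simp [Trip.diagBr_apply])
        (fun x y => by simp [Trip.diagBr_apply]) (fun x y => by simp [Trip.diagBr_apply])
        r r,
      Trip.schouten_zero B (Trip.diagBr B) (Trip.iB k M) (Trip.iB k M) (Trip.iA k M)
        (Trip.iA k M) (fun x y => by simp [Trip.diagBr_apply])
        (fun x y => by simp [Trip.diagBr_apply]) (fun x y => by simp [Trip.diagBr_apply])
        (Trip.τ k M r) r,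
      Trip.schouten_zero B (Trip.diagBr B) (Trip.iB k M) (Trip.iB k M) (Trip.iC k M)
        (Trip.iC k M) (fun x y => by simp [Trip.diagBr_apply])
        (fun x y => by simp [Trip.diagBr_apply]) (fun x y => by simp [Trip.diagBr_apply])
        (Trip.τ k M r) r,
      Trip.schouten_zero B (Trip.diagBr B) (Trip.iC k M) (Trip.iC k M) (Trip.iA k M)
        (Trip.iA k M) (fun x y => by simp [Trip.diagBr_apply])
        (fun x y => by simp [Trip.diagBr_apply]) (fun x y => by simp [Trip.diagBr_apply])
        r r,
      Trip.schouten_zero B (Trip.diagBr B) (Trip.iC k M) (Trip.iC k M) (Trip.iB k M)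
        (Trip.iB k M) (fun x y => by simp [Trip.diagBr_apply])
        (fun x y => by simp [Trip.diagBr_apply]) (fun x y => by simp [Trip.diagBr_apply])
        r (Trip.τ k M r),
      hrr, hττ]
    simp
  have core : TensorProduct.map (Trip.FF k M) (Trip.FF k M) r +
      TensorProduct.map (Trip.GG k M) (Trip.HH k M) q =
      Trip.rTriple r + Trip.chiTriple r := Trip.theta_core r
  have g1 : TensorProduct.map (Trip.FF k M)
        (TensorProduct.map (Trip.GG k M) (Trip.HH k M)) (Trip.s1223 B (r ⊗ₜ[k] q)) +
      TensorProduct.map (Trip.FF k M)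
        (TensorProduct.map (Trip.GG k M) (Trip.HH k M)) (Trip.s1323 B (r ⊗ₜ[k] q)) = 0 := by
    rw [← map_add, l1 r, map_zero]
  have g2 : TensorProduct.map (Trip.GG k M)
        (TensorProduct.map (Trip.HH k M) (Trip.FF k M)) (Trip.s1213 B (q ⊗ₜ[k] r)) +
      TensorProduct.map (Trip.GG k M)
        (TensorProduct.map (Trip.HH k M) (Trip.FF k M)) (Trip.s1223 B (q ⊗ₜ[k] r)) = 0 := by
    rw [← map_add, l2 r, map_zero]
  have g3 : TensorProduct.map (Trip.GG k M)
        (TensorProduct.map (Trip.FF k M) (Trip.HH k M)) (Trip.s1213 B (r ⊗ₜ[k] q)) +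
      TensorProduct.map (Trip.GG k M)
        (TensorProduct.map (Trip.FF k M) (Trip.HH k M)) (Trip.s1323 B (q ⊗ₜ[k] r)) =
      TensorProduct.map (Trip.GG k M)
        (TensorProduct.map (Trip.FF k M) (Trip.HH k M)) a13 := by
    rw [← map_add, hf3]
  have g7 : TensorProduct.map (Trip.GG k M)
        (TensorProduct.map (Trip.FF k M) (Trip.HH k M)) a13 +
      TensorProduct.map (Trip.GG k M)
        (TensorProduct.map (Trip.iB k M) (Trip.HH k M)) a13 +
      TensorProduct.map (Trip.GG k M)
        (TensorProduct.map (Trip.GG k M) (Trip.HH k M)) a13 =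
      TensorProduct.map (Trip.GG k M)
        (TensorProduct.map (Trip.HH k M) (Trip.HH k M)) a13 := by
    rw [← LinearMap.add_apply, ← LinearMap.add_apply, ← TensorProduct.map_add_right,
      ← TensorProduct.map_add_right, ← TensorProduct.map_add_left,
      ← TensorProduct.map_add_left, Trip.sum_FBG]
  have g1' : TensorProduct.map (Trip.FF k M)
        (TensorProduct.map (Trip.GG k M) (Trip.HH k M)) (Trip.s1323 B (r ⊗ₜ[k] q)) =
      0 - TensorProduct.map (Trip.FF k M)
        (TensorProduct.map (Trip.GG k M) (Trip.HH k M)) (Trip.s1223 B (r ⊗ₜ[k] q)) := by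
    rw [← g1]; abel
  have g2' : TensorProduct.map (Trip.GG k M)
        (TensorProduct.map (Trip.HH k M) (Trip.FF k M)) (Trip.s1223 B (q ⊗ₜ[k] r)) =
      0 - TensorProduct.map (Trip.GG k M)
        (TensorProduct.map (Trip.HH k M) (Trip.FF k M)) (Trip.s1213 B (q ⊗ₜ[k] r)) := by
    rw [← g2]; abel
  have g3' : TensorProduct.map (Trip.GG k M)
        (TensorProduct.map (Trip.FF k M) (Trip.HH k M)) (Trip.s1323 B (q ⊗ₜ[k] r)) =
      TensorProduct.map (Trip.GG k M)
        (TensorProduct.map (Trip.FF k M) (Trip.HH k M)) a13 -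
      TensorProduct.map (Trip.GG k M)
        (TensorProduct.map (Trip.FF k M) (Trip.HH k M)) (Trip.s1213 B (r ⊗ₜ[k] q)) := by
    rw [← g3]; abel
  have g7' : TensorProduct.map (Trip.GG k M)
        (TensorProduct.map (Trip.GG k M) (Trip.HH k M)) a13 =
      TensorProduct.map (Trip.GG k M)
        (TensorProduct.map (Trip.HH k M) (Trip.HH k M)) a13 -
      TensorProduct.map (Trip.GG k M)
        (TensorProduct.map (Trip.FF k M) (Trip.HH k M)) a13 -
      TensorProduct.map (Trip.GG k M)
        (TensorProduct.map (Trip.iB k M) (Trip.HH k M)) a13 := by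
    rw [← g7]; abel
  have hA' : Trip.schouten (Trip.diagBr B) (Trip.rTriple r + Trip.chiTriple r)
      (Trip.rTriple r + Trip.chiTriple r) = 0 := by
    rw [← core, Trip.schouten_expand2,
      Trip.schouten_same B (Trip.diagBr B) (Trip.FF k M) (Trip.hFF B) r r,
      Trip.schouten_red B (Trip.diagBr B) (Trip.FF k M) (Trip.FF k M) (Trip.GG k M)
        (Trip.HH k M) (Trip.GG k M) (Trip.GG k M) (Trip.HH k M) (Trip.hFG B) (Trip.hFG B)
        (Trip.hFH B) r q,
      Trip.schouten_red B (Trip.diagBr B) (Trip.GG k M) (Trip.HH k M) (Trip.FF k M)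
        (Trip.FF k M) (Trip.GG k M) (Trip.HH k M) (Trip.HH k M) (Trip.hGF B) (Trip.hHF B)
        (Trip.hHF B) q r,
      Trip.schouten_red B (Trip.diagBr B) (Trip.GG k M) (Trip.HH k M) (Trip.GG k M)
        (Trip.HH k M) (-(Trip.GG k M)) (-(Trip.iB k M)) (Trip.HH k M) (Trip.hGG B)
        (Trip.hHG B) (Trip.hHH B) q q,
      hrr, map_zero, hf1, hf2, Trip.map_neg_left_apply, Trip.map_neg_left',
      Trip.map_neg_right_apply]
    simp only [map_neg, neg_neg, ← ha13]
    rw [g1', g2', g3', g7']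
    abel
  have hexp := Trip.schouten_expand2 (Trip.diagBr B) (Trip.rTriple r) (Trip.chiTriple r)
  rw [hA', hRR, zero_add] at hexp
  exact ⟨c1, c2, hexp.symm, c4, c5, c6⟩
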